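/- arXiv:2107.02699 — 4 statements merged into one kernel-verified Lean document; each statement's English description precedes it below -/
import Mathlib

section
/- If λ ∈ (1/2, 1) is the reciprocal of a Pisot number and b ≥ 2 is an integer, then log b / log λ is irrational. -/
/-!
If `log b / log β = q / p` were rational, then `β ^ p = b ^ q` would be an integer, so every
conjugate `z` of `β` would satisfy `z ^ p = b ^ q` and hence `‖z‖ = β > 1`. The Pisot condition
then leaves `β` as the only root of its separable minimal polynomial, so `β` is rational, hence an
integer; but `1 < β = λ⁻¹ < 2`.
-/

open Polynomial

theorem pow_eq_algebraMap_of_aeval_minpoly_eq_zero {K A B : Type*} [Field K] [Ring A]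
    [Algebra K A] [CommRing B] [Algebra K B] {x : A} {z : B} {n : ℕ} {a : K}
    (hx : x ^ n = algebraMap K A a) (hz : aeval z (minpoly K x) = 0) :
    z ^ n = algebraMap K B a := by
  obtain ⟨g, hg⟩ := minpoly.dvd K x (p := X ^ n - C a) (by simp [hx])
  simpa [hz, sub_eq_zero] using congrArg (aeval z) hg

theorem minpoly_natDegree_eq_one_of_subsingleton_rootSet {K A L : Type*} [Field K]
    [PerfectField K] [CommRing A] [IsDomain A] [Algebra K A] [Field L] [IsAlgClosed L]
    [Algebra K L] {x : A} (hx : IsIntegral K x) (h : ((minpoly K x).rootSet L).Subsingleton) :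
    (minpoly K x).natDegree = 1 := by
  classical
  have hcard := card_rootSet_eq_natDegree (K := L)
    (PerfectField.separable_of_irreducible (minpoly.irreducible hx)) (IsAlgClosed.splits _)
  have := Fintype.card_le_one_iff_subsingleton.mpr h.coe_sort
  have := minpoly.natDegree_pos hx
  omega

theorem exists_intCast_eq_of_isIntegral_of_mem_range {L : Type*} [Field L] [CharZero L] {x : L}
    (hint : IsIntegral ℤ x) (hx : x ∈ (algebraMap ℚ L).range) : ∃ m : ℤ, (m : L) = x := by
  obtain ⟨q, rfl⟩ := hx
  obtain ⟨m, rfl⟩ := IsIntegrallyClosed.isIntegral_iff.mp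
    ((isIntegral_algebraMap_iff (algebraMap ℚ L).injective).mp hint)
  exact ⟨m, by simp⟩

theorem exists_pow_eq_natCast_pow_of_not_irrational {x : ℝ} {b : ℕ} (hx : 1 < x) (hb : 1 < b)
    (h : ¬ Irrational (Real.log b / Real.log x)) :
    ∃ p q : ℕ, 0 < p ∧ x ^ p = (b : ℝ) ^ q := by
  obtain ⟨r, hr⟩ : ∃ r : ℚ, (r : ℝ) = Real.log b / Real.log x := by
    simpa [Irrational] using h
  have hlogx := Real.log_pos hx
  have hr0 : 0 < r := by
    exact_mod_cast hr ▸ div_pos (Real.log_pos (by exact_mod_cast hb)) hlogx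
  have hnum : ((r.num.toNat : ℕ) : ℝ) = r.num := by
    exact_mod_cast Int.toNat_of_nonneg (Rat.num_pos.mpr hr0).le
  refine ⟨r.num.toNat, r.den, by simpa using hr0, ?_⟩
  have hlog : (r.num.toNat : ℝ) * Real.log x = r.den * Real.log b := by
    rw [hnum]
    rw [Rat.cast_def, div_eq_div_iff (by positivity) hlogx.ne'] at hr
    linarith
  apply Real.log_injOn_pos (Set.mem_Ioi.mpr (by positivity)) (Set.mem_Ioi.mpr (by positivity))
  rw [Real.log_pow, Real.log_pow, hlog]

theorem norm_eq_of_aeval_minpoly_eq_zero_of_pow_eq_natCast {x : ℝ} (hx : 0 ≤ x) {p n : ℕ}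
    (hp : p ≠ 0) (hxp : x ^ p = n) {z : ℂ} (hz : aeval z (minpoly ℚ x) = 0) :
    ‖z‖ = x := by
  have hzp : z ^ p = n := by
    simpa using pow_eq_algebraMap_of_aeval_minpoly_eq_zero (a := (n : ℚ)) (by simpa using hxp) hz
  rw [← pow_left_inj₀ (norm_nonneg z) hx hp, ← norm_pow, hzp, hxp]
  simp

/-- If `λ ∈ (1/2, 1)` is the reciprocal of a Pisot number (an algebraic integer `β > 1`
all of whose Galois conjugates have modulus `< 1`) and `b ≥ 2` is an integer, then
`log b / log λ` is irrational. -/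
theorem stmt_0 (β lam : ℝ) (hβ : 1 < β) (hint : IsIntegral ℤ β)
    (hconj : ∀ z : ℂ, Polynomial.aeval z (minpoly ℚ β) = 0 → z ≠ (β : ℂ) →
      ‖z‖ < 1)
    (hlam : lam = β⁻¹) (hmem : lam ∈ Set.Ioo (1/2 : ℝ) 1)
    (b : ℕ) (hb : 2 ≤ b) :
    Irrational (Real.log b / Real.log lam) := by
  subst hlam
  have hβ2 : β < 2 := by
    have := hmem.1
    rw [lt_inv_comm₀ (by norm_num) (by linarith)] at this
    linarith
  rw [Real.log_inv, div_neg, irrational_neg_iff]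
  by_contra hrat
  obtain ⟨p, q, hp, hpow⟩ := exists_pow_eq_natCast_pow_of_not_irrational hβ hb hrat
  have hrootSet : ((minpoly ℚ β).rootSet ℂ) ⊆ {(β : ℂ)} := by
    intro z hz
    rw [mem_rootSet] at hz
    by_contra hne
    have := norm_eq_of_aeval_minpoly_eq_zero_of_pow_eq_natCast (by linarith) hp.ne'
      (by exact_mod_cast hpow) hz.2
    linarith [hconj z hz.2 hne]
  obtain ⟨m, rfl⟩ := exists_intCast_eq_of_isIntegral_of_mem_range hint
    (minpoly.natDegree_eq_one_iff.mp <| minpoly_natDegree_eq_one_of_subsingleton_rootSet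
      hint.tower_top (Set.subsingleton_singleton.anti hrootSet))
  have : 1 < m ∧ m < 2 := ⟨by exact_mod_cast hβ, by exact_mod_cast hβ2⟩
  omega
end

section
/- Let ν be a Borel probability measure on ℝ and λ ∈ (0,1). Then for every r > 0 and every real l ≠ 0, ∫₀¹ |𝓕_l(S_{λ^{-t}} ν)|² dt ≤ 1/(r·|l|·log(λ^{-1})) + ∫ ν(B_r(y)) dν(y), where S_c denotes the pushforward of ν under multiplication by c, 𝓕_l(μ) = ∫ e^{2πi l x} dμ(x), and B_r(y) is the open ball of radius r around y. -/
open MeasureTheory Real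

/-!
Expanding the square, `|𝓕_l(S_c ν)|² = ∬ cos (2π l c (x - y)) dν(x) dν(y)`. With
`c = λ^{-t} = e^{tL}`, `L = log λ⁻¹`, integrate in `t` first. Pairs with `|x - y| < r` contribute
at most `1`, which sums to `∫ ν(B_r(y)) dν(y)`; for the other pairs the phase
`t ↦ 2π l (x - y) e^{tL}` grows at rate at least `2π |l| r L`, and one integration by parts
against the decreasing amplitude `e^{-tL}` bounds the oscillatory integral by `1/(π r |l| L)`.
-/

theorem abs_intervalIntegral_cos_mul_exp_le {a L : ℝ} (ha : a ≠ 0) (hL : 0 < L) :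
    |∫ t in (0:ℝ)..1, cos (a * exp (t * L))| ≤ 2 / (|a| * L) := by
  set u : ℝ → ℝ := fun t => exp (-(t * L)) / L
  set v : ℝ → ℝ := fun t => sin (a * exp (t * L)) / a
  set u' : ℝ → ℝ := fun t => -exp (-(t * L))
  set v' : ℝ → ℝ := fun t => cos (a * exp (t * L)) * (exp (t * L) * L)
  have hu : ∀ t, HasDerivAt u (u' t) t := fun t =>
    ((((hasDerivAt_id' t).mul_const L).neg.exp).div_const L).congr_deriv
      (by simp only [u', Pi.neg_apply]; field_simp)
  have hv : ∀ t, HasDerivAt v (v' t) t := fun t =>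
    ((((hasDerivAt_id' t).mul_const L).exp.const_mul a).sin.div_const a).congr_deriv
      (by simp only [v']; field_simp)
  have huv' : ∀ t, u t * v' t = cos (a * exp (t * L)) := fun t => by
    simp only [u, v', exp_neg]
    field_simp
  have hv_le : ∀ t, |v t| ≤ 1 / |a| := fun t => by
    rw [abs_div]
    gcongr
    exact abs_sin_le_one _
  have hu_nonneg : ∀ t, 0 ≤ u t := fun t => by positivity
  have hcont_u' : Continuous u' := by fun_prop
  have hparts := intervalIntegral.integral_mul_deriv_eq_deriv_mul (fun t _ => hu t)
    (fun t _ => hv t) (hcont_u'.intervalIntegrable 0 1)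
    ((by fun_prop : Continuous v').intervalIntegrable 0 1)
  have hftc := intervalIntegral.integral_eq_sub_of_hasDerivAt (fun t _ => hu t)
    (hcont_u'.intervalIntegrable 0 1)
  have hboundary : ∀ t, |u t * v t| ≤ u t * (1 / |a|) := fun t => by
    rw [abs_mul, abs_of_nonneg (hu_nonneg t)]
    exact mul_le_mul_of_nonneg_left (hv_le t) (hu_nonneg t)
  have hremainder : |∫ t in (0:ℝ)..1, u' t * v t| ≤ (u 0 - u 1) * (1 / |a|) := by
    have hbound : ∀ t, ‖u' t * v t‖ ≤ -u' t * (1 / |a|) := fun t => by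
      rw [Real.norm_eq_abs, abs_mul, abs_of_neg (by simp [u', exp_pos])]
      exact mul_le_mul_of_nonneg_left (hv_le t) (by simp [u', (exp_pos _).le])
    refine (intervalIntegral.norm_integral_le_of_norm_le zero_le_one
      (Filter.Eventually.of_forall fun t _ => hbound t)
      ((hcont_u'.neg.mul_const _).intervalIntegrable 0 1)).trans_eq ?_
    rw [intervalIntegral.integral_mul_const, intervalIntegral.integral_neg, hftc, neg_sub]
  simp only [huv'] at hparts
  rw [hparts]
  have h₀ := abs_le.mp (hboundary 0)
  have h₁ := abs_le.mp (hboundary 1)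
  have hrem := abs_le.mp hremainder
  calc |u 1 * v 1 - u 0 * v 0 - ∫ t in (0:ℝ)..1, u' t * v t| ≤ 2 * u 0 * (1 / |a|) := by
        rw [abs_le]; constructor <;> linarith
    _ = 2 / (|a| * L) := by simp only [u]; field_simp; simp

theorem setIntegral_cos_mul_exp_le_indicator {r L l : ℝ} (hr : 0 < r) (hL : 0 < L) (hl : l ≠ 0)
    (p : ℝ × ℝ) :
    ∫ t in Set.Ioo (0:ℝ) 1, cos (2 * π * l * (p.1 - p.2) * exp (t * L)) ≤
      {q : ℝ × ℝ | dist q.1 q.2 < r}.indicator 1 p + 1 / (π * r * |l| * L) := by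
  have hC : 0 ≤ 1 / (π * r * |l| * L) := by positivity
  rw [← integral_Ioc_eq_integral_Ioo, ← intervalIntegral.integral_of_le zero_le_one]
  refine (le_abs_self _).trans ?_
  by_cases hp : dist p.1 p.2 < r
  · have h := intervalIntegral.norm_integral_le_of_norm_le_const (a := 0) (b := 1) (C := 1)
      (f := fun t => cos (2 * π * l * (p.1 - p.2) * exp (t * L))) fun t _ => abs_cos_le_one _
    rw [Set.indicator_of_mem (by exact hp)]
    simp only [Real.norm_eq_abs, sub_zero, abs_one, mul_one] at h
    simp only [Pi.one_apply]
    linarith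
  · rw [Set.indicator_of_notMem (by exact hp), zero_add]
    have hdist : r ≤ |p.1 - p.2| := (not_lt.mp hp).trans_eq (Real.dist_eq _ _)
    have hp0 : p.1 - p.2 ≠ 0 := abs_pos.mp (hr.trans_le hdist)
    refine (abs_intervalIntegral_cos_mul_exp_le (by positivity) hL).trans ?_
    rw [abs_mul, abs_mul, abs_mul, abs_two, abs_of_pos pi_pos]
    rw [div_le_div_iff₀ (by positivity) (by positivity)]
    calc 2 * (π * r * |l| * L) = 2 * π * |l| * L * r := by ring
      _ ≤ 2 * π * |l| * L * |p.1 - p.2| := by gcongr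
      _ = 1 * (2 * π * |l| * |p.1 - p.2| * L) := by ring

theorem sq_norm_integral_cexp_mul_I {α : Type*} [MeasurableSpace α] (μ : Measure α)
    [IsFiniteMeasure μ] {θ : α → ℝ} (hθ : Measurable θ) :
    ‖∫ x, Complex.exp (θ x * Complex.I) ∂μ‖ ^ 2 = ∫ p, cos (θ p.1 - θ p.2) ∂μ.prod μ := by
  have hint : Integrable (fun p : α × α => Complex.exp (↑(θ p.1 - θ p.2) * Complex.I))
      (μ.prod μ) := by
    refine Integrable.of_bound (by fun_prop) 1 (Filter.Eventually.of_forall fun p => ?_)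
    rw [Complex.norm_exp_ofReal_mul_I]
  calc ‖∫ x, Complex.exp (θ x * Complex.I) ∂μ‖ ^ 2
      = ((∫ x, Complex.exp (θ x * Complex.I) ∂μ) *
          starRingEnd ℂ (∫ x, Complex.exp (θ x * Complex.I) ∂μ)).re := by
        rw [Complex.mul_conj, Complex.sq_norm, Complex.ofReal_re]
    _ = (∫ p : α × α, Complex.exp (↑(θ p.1 - θ p.2) * Complex.I) ∂μ.prod μ).re := by
        rw [← integral_conj, ← integral_prod_mul]
        congr 2 with p
        rw [← Complex.exp_conj, ← Complex.exp_add]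
        simp only [map_mul, Complex.conj_ofReal, Complex.conj_I]
        push_cast
        ring_nf
    _ = ∫ p, cos (θ p.1 - θ p.2) ∂μ.prod μ := by
        have h := integral_re hint
        simp only [RCLike.re_to_complex, Complex.exp_ofReal_mul_I_re] at h
        exact h.symm

theorem sq_norm_integral_cexp_map_mul (ν : Measure ℝ) [IsFiniteMeasure ν] (l c : ℝ) :
    ‖∫ x, Complex.exp (2 * π * Complex.I * l * x) ∂(ν.map (fun x => c * x))‖ ^ 2 =
      ∫ p, cos (2 * π * l * (p.1 - p.2) * c) ∂ν.prod ν := by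
  rw [integral_map (by fun_prop) (by fun_prop)]
  convert sq_norm_integral_cexp_mul_I ν (θ := fun x => 2 * π * l * c * x) (by fun_prop) using 3
  · congr 2 with x
    push_cast
    ring_nf
  · ring_nf

theorem measureReal_prod_dist_lt {α : Type*} [PseudoMetricSpace α] [MeasurableSpace α]
    [OpensMeasurableSpace α] [SecondCountableTopology α] (ν : Measure α) [IsFiniteMeasure ν]
    (r : ℝ) :
    (ν.prod ν).real {p : α × α | dist p.1 p.2 < r} = ∫ y, ν.real (Metric.ball y r) ∂ν := by
  have hS : MeasurableSet {p : α × α | dist p.1 p.2 < r} :=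
    measurableSet_lt (by fun_prop) measurable_const
  have hslice : ∀ x, Prod.mk x ⁻¹' {p : α × α | dist p.1 p.2 < r} = Metric.ball x r := fun x => by
    ext y; simp [Metric.mem_ball, dist_comm]
  rw [measureReal_def, Measure.prod_apply hS]
  simp only [hslice]
  rw [← integral_toReal]
  · rfl
  · have h := measurable_measure_prodMk_left (ν := ν) hS
    simp only [hslice] at h
    exact h.aemeasurable
  · exact Filter.Eventually.of_forall fun x => measure_lt_top ν _

theorem setIntegral_integral_cos_mul_exp_le (ν : Measure ℝ) [IsProbabilityMeasure ν]
    {r L l : ℝ} (hr : 0 < r) (hL : 0 < L) (hl : l ≠ 0) :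
    ∫ t in Set.Ioo (0:ℝ) 1, ∫ p, cos (2 * π * l * (p.1 - p.2) * exp (t * L)) ∂ν.prod ν ≤
      1 / (π * r * |l| * L) + ∫ y, ν.real (Metric.ball y r) ∂ν := by
  set S := {q : ℝ × ℝ | dist q.1 q.2 < r}
  set C := 1 / (π * r * |l| * L)
  have hS : MeasurableSet S := measurableSet_lt (by fun_prop) measurable_const
  have hind : Integrable (S.indicator (1 : ℝ × ℝ → ℝ)) (ν.prod ν) :=
    (integrable_const 1).indicator hS
  have hint : Integrable (Function.uncurry fun t (p : ℝ × ℝ) =>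
      cos (2 * π * l * (p.1 - p.2) * exp (t * L)))
      ((volume.restrict (Set.Ioo (0:ℝ) 1)).prod (ν.prod ν)) :=
    Integrable.of_bound (by fun_prop) 1 (Filter.Eventually.of_forall fun _ => abs_cos_le_one _)
  calc ∫ t in Set.Ioo (0:ℝ) 1, ∫ p, cos (2 * π * l * (p.1 - p.2) * exp (t * L)) ∂ν.prod ν
      = ∫ p, (∫ t in Set.Ioo (0:ℝ) 1, cos (2 * π * l * (p.1 - p.2) * exp (t * L))) ∂ν.prod ν :=
        integral_integral_swap hint
    _ ≤ ∫ p, (S.indicator (1 : ℝ × ℝ → ℝ) p + C) ∂ν.prod ν :=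
        integral_mono hint.integral_prod_right (hind.add (integrable_const C))
          (setIntegral_cos_mul_exp_le_indicator hr hL hl)
    _ = C + ∫ y, ν.real (Metric.ball y r) ∂ν := by
        rw [integral_add hind (integrable_const C), integral_indicator_one hS,
          measureReal_prod_dist_lt, integral_const, probReal_univ, one_smul, add_comm]

/-- Hochman's lemma: for a Borel probability measure `ν` on `ℝ`, `λ ∈ (0,1)`, `r > 0`
and real `l ≠ 0`,
`∫₀¹ |𝓕_l(S_{λ^{-t}} ν)|² dt ≤ 1/(r·|l|·log λ⁻¹) + ∫ ν(B_r(y)) dν(y)`. -/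
theorem stmt_5 (ν : Measure ℝ) [IsProbabilityMeasure ν]
    (lam : ℝ) (hlam : lam ∈ Set.Ioo (0:ℝ) 1) (r : ℝ) (hr : 0 < r) (l : ℝ) (hl : l ≠ 0) :
    ∫ t in Set.Ioo (0:ℝ) 1,
        (‖(∫ x, Complex.exp (2 * π * Complex.I * l * x)
          ∂(Measure.map (fun x => lam ^ (-t) * x) ν))‖) ^ 2 ≤
      1 / (r * |l| * Real.log lam⁻¹) +
        ∫ y, (ν (Metric.ball y r)).toReal ∂ν := by
  obtain ⟨hlam0, hlam1⟩ := hlam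
  set L := Real.log lam⁻¹
  have hL : 0 < L := Real.log_pos (one_lt_inv_iff₀.mpr ⟨hlam0, hlam1⟩)
  have hpow : ∀ t : ℝ, lam ^ (-t) = exp (t * L) := fun t => by
    rw [Real.rpow_def_of_pos hlam0, show L = -log lam from Real.log_inv lam]; ring_nf
  have hπ : 1 / (π * r * |l| * L) ≤ 1 / (r * |l| * L) := by
    have hrlL : 0 < r * |l| * L := by positivity
    exact one_div_le_one_div_of_le hrlL (by nlinarith [pi_gt_three])
  simp only [hpow, sq_norm_integral_cexp_map_mul]
  exact (setIntegral_integral_cos_mul_exp_le ν hr hL hl).trans (add_le_add_left hπ _)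
end

section
/- A probability measure satisfying the self-similarity equation is unique: given contracting similarities φ_i(x) = λ_i x + t_i with 0 < |λ_i| < 1 and a probability vector (p_i), there is at most one Borel probability measure μ on ℝ with compact support satisfying μ = Σ_i p_i · (φ_i)_* μ. -/
/-!
Pass to characteristic functions. Self-similarity reads
`φ(ξ) = ∑ i, p i * exp (i t_i ξ) * φ(λ_i ξ)`, so the difference `D` of the characteristic functions
of two self-similar measures satisfies `‖D ξ‖ ≤ ∑ i, p i * ‖D (λ_i ξ)‖`. Iterating this pushes the
argument into any neighbourhood of `0`, where `D` is small since it is continuous with `D 0 = 0`.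
Hence `D = 0`, and characteristic functions determine finite measures.
-/

open MeasureTheory Filter Topology Complex

theorem nonpos_of_le_sum_comp_smul {E ι : Type*} [NormedAddCommGroup E] [NormedSpace ℝ E]
    [Fintype ι] {f : E → ℝ} (hf : Tendsto f (𝓝 0) (𝓝 0)) {w r : ι → ℝ} (hw : ∀ i, 0 ≤ w i)
    (hw_sum : ∑ i, w i ≤ 1) (hr : ∀ i, |r i| < 1) (h : ∀ x, f x ≤ ∑ i, w i * f (r i • x))
    (x : E) : f x ≤ 0 := by
  obtain ⟨c, hc, hrc⟩ : ∃ c ∈ Set.Ico (0 : ℝ) 1, ∀ i, |r i| ≤ c := by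
    have : ∀ᶠ c in 𝓝[<] (1 : ℝ), c ∈ Set.Ico 0 1 ∧ ∀ i, |r i| ≤ c :=
      Eventually.and (Ico_mem_nhdsLT zero_lt_one) <| eventually_all.2 fun i ↦
        nhdsWithin_le_nhds ((eventually_gt_nhds (hr i)).mono fun _ ↦ le_of_lt)
    exact this.exists
  refine le_of_forall_pos_le_add fun ε hε ↦ ?_
  obtain ⟨δ, hδ, hfδ⟩ := Metric.eventually_nhds_iff.1 (hf.eventually (gt_mem_nhds hε))
  have hball : ∀ n : ℕ, ∀ y : E, c ^ n * ‖y‖ < δ → f y ≤ ε := by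
    intro n
    induction n with
    | zero => exact fun y hy ↦ (hfδ (by simpa using hy)).le
    | succ n ih =>
      intro y hy
      calc f y ≤ ∑ i, w i * f (r i • y) := h y
        _ ≤ ∑ i, w i * ε := by
          gcongr with i
          · exact hw i
          refine ih _ (lt_of_le_of_lt ?_ hy)
          rw [norm_smul, Real.norm_eq_abs, pow_succ, mul_assoc]
          gcongr
          exacts [pow_nonneg hc.1 n, hrc i]
        _ = (∑ i, w i) * ε := by rw [Finset.sum_mul]
        _ ≤ ε := mul_le_of_le_one_left hε.le hw_sum
  obtain ⟨n, hn⟩ := ((tendsto_pow_atTop_nhds_zero_of_lt_one hc.1 hc.2).mul_const ‖x‖ |>.eventually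
    (gt_mem_nhds (by simpa using hδ))).exists
  simpa using hball n x hn

theorem charFun_sum_smul_measure {ι : Type*} [Fintype ι] {ν : ι → Measure ℝ}
    [∀ i, IsFiniteMeasure (ν i)] {p : ι → ENNReal} (hp : ∀ i, p i ≠ ⊤) (ξ : ℝ) :
    charFun (∑ i, p i • ν i) ξ = ∑ i, (p i).toReal * charFun (ν i) ξ := by
  simp_rw [charFun_eq_integral_innerProbChar]
  rw [integral_finsetSum_measure fun i _ ↦
    ((BoundedContinuousFunction.innerProbChar ξ).integrable _).smul_measure (hp i)]
  simp_rw [integral_smul_measure, Complex.real_smul]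

theorem charFun_map_mul_add_const {μ : Measure ℝ} (a b ξ : ℝ) :
    charFun (μ.map (fun x ↦ a * x + b)) ξ = charFun μ (a * ξ) * cexp (b * ξ * I) := by
  rw [show (fun x ↦ a * x + b) = (· + b) ∘ (a * ·) from rfl,
    ← Measure.map_map (by fun_prop) (by fun_prop), charFun_map_add_const, charFun_map_mul]
  simp [mul_comm]

theorem norm_charFun_sub_le_of_selfSimilar {ι : Type*} [Fintype ι] {a b : ι → ℝ}
    {p : ι → ENNReal} (hp : ∀ i, p i ≠ ⊤) {μ ν : Measure ℝ} [IsFiniteMeasure μ]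
    [IsFiniteMeasure ν] (hμ : μ = ∑ i, p i • μ.map (fun x ↦ a i * x + b i))
    (hν : ν = ∑ i, p i • ν.map (fun x ↦ a i * x + b i)) (ξ : ℝ) :
    ‖charFun μ ξ - charFun ν ξ‖ ≤
      ∑ i, (p i).toReal * ‖charFun μ (a i * ξ) - charFun ν (a i * ξ)‖ := by
  have hexpand : ∀ (τ : Measure ℝ) [IsFiniteMeasure τ],
      τ = ∑ i, p i • τ.map (fun x ↦ a i * x + b i) →
      charFun τ ξ = ∑ i, (p i).toReal * (charFun τ (a i * ξ) * cexp (b i * ξ * I)) := by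
    intro τ _ hτ
    nth_rw 1 [hτ]
    rw [charFun_sum_smul_measure hp]
    simp_rw [charFun_map_mul_add_const]
  calc ‖charFun μ ξ - charFun ν ξ‖
      = ‖∑ i, (p i).toReal * ((charFun μ (a i * ξ) - charFun ν (a i * ξ)) *
          cexp (b i * ξ * I))‖ := by
        rw [hexpand μ hμ, hexpand ν hν, ← Finset.sum_sub_distrib]
        simp only [mul_sub, sub_mul]
    _ ≤ ∑ i, ‖(p i).toReal * ((charFun μ (a i * ξ) - charFun ν (a i * ξ)) *
          cexp (b i * ξ * I))‖ := norm_sum_le _ _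
    _ = ∑ i, (p i).toReal * ‖charFun μ (a i * ξ) - charFun ν (a i * ξ)‖ := by
        simp [← ofReal_mul, norm_exp_ofReal_mul_I]

theorem stmt_12_general {I : Type*} [Fintype I]
    (lam : I → ℝ) (hlam : ∀ i, 0 < |lam i| ∧ |lam i| < 1) (t : I → ℝ)
    (p : I → ENNReal) (hp : ∑ i, p i = 1)
    (μ ν : Measure ℝ) [IsProbabilityMeasure μ] [IsProbabilityMeasure ν]
    (hμ : μ = ∑ i : I, p i • Measure.map (fun x => lam i * x + t i) μ)
    (hν : ν = ∑ i : I, p i • Measure.map (fun x => lam i * x + t i) ν) :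
    μ = ν := by
  have hp_ne_top : ∀ i, p i ≠ ⊤ := fun i ↦
    ENNReal.sum_ne_top.1 (hp ▸ ENNReal.one_ne_top) i (Finset.mem_univ i)
  have hp_real : ∑ i, (p i).toReal = 1 := by
    rw [← ENNReal.toReal_sum fun i _ ↦ hp_ne_top i, hp, ENNReal.toReal_one]
  set D : ℝ → ℂ := fun ξ ↦ charFun μ ξ - charFun ν ξ
  have hD : Tendsto (fun ξ ↦ ‖D ξ‖) (𝓝 0) (𝓝 0) := by
    have hD_cont : Continuous fun ξ ↦ ‖D ξ‖ := (continuous_charFun.sub continuous_charFun).norm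
    simpa [D] using hD_cont.tendsto 0
  refine Measure.ext_of_charFun (funext fun ξ ↦ sub_eq_zero.1 (norm_le_zero_iff.1 ?_))
  exact nonpos_of_le_sum_comp_smul hD (fun i ↦ ENNReal.toReal_nonneg) hp_real.le
    (fun i ↦ (hlam i).2) (norm_charFun_sub_le_of_selfSimilar hp_ne_top hμ hν) ξ

/-- Uniqueness of the self-similar measure: given contracting similarities
`φ_i(x) = λ_i x + t_i` with `0 < |λ_i| < 1` and a probability vector `(p_i)`,
there is at most one compactly supported Borel probability measure `μ` on `ℝ` with
`μ = Σ_i p_i • (φ_i)_* μ`. -/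
theorem stmt_12 {I : Type*} [Fintype I]
    (lam : I → ℝ) (hlam : ∀ i, 0 < |lam i| ∧ |lam i| < 1) (t : I → ℝ)
    (p : I → ENNReal) (hp : ∑ i, p i = 1)
    (μ ν : Measure ℝ) [IsProbabilityMeasure μ] [IsProbabilityMeasure ν]
    (hμc : ∃ K : Set ℝ, IsCompact K ∧ μ Kᶜ = 0)
    (hνc : ∃ K : Set ℝ, IsCompact K ∧ ν Kᶜ = 0)
    (hμ : μ = ∑ i : I, p i • Measure.map (fun x => lam i * x + t i) μ)
    (hν : ν = ∑ i : I, p i • Measure.map (fun x => lam i * x + t i) ν) :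
    μ = ν :=
  stmt_12_general lam hlam t p hp μ ν hμ hν
end

section
/- If μ is a non-atomic self-similar measure of an IFS {φ_i}_{i∈I} on ℝ (with all p_i > 0 and at least the attractor X not a point), then there exists M ∈ ℕ and words (i_1,…,i_M), (i'_1,…,i'_M) ∈ I^M such that the convex hulls of (φ_{i_1}∘⋯∘φ_{i_M})(X) and (φ_{i'_1}∘⋯∘φ_{i'_M})(X) are disjoint. -/
/-! If all translations `t i` coincided, the attractor would be the attractor of a single
contraction, i.e. a point, which would be an atom of `μ`. So some `t i ≠ t j`, and the maps
`φ i`, `φ j` have distinct fixed points `c i ≠ c j`. Iterating `φ i` (resp. `φ j`) `n` times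
shrinks `X` into a ball of radius `O(λⁿ)` about `c i` (resp. `c j`); for `n` large these two
balls are disjoint, and being convex they contain the convex hulls of the cylinders. -/

open MeasureTheory Metric

/-- Composition of an IFS along a word. -/
def compWord {I : Type*} (φ : I → ℝ → ℝ) : List I → ℝ → ℝ
  | [], x => x
  | i :: w, x => φ i (compWord φ w x)

theorem compWord_replicate {I : Type*} (φ : I → ℝ → ℝ) (i : I) (n : ℕ) :
    compWord φ (List.replicate n i) = (φ i)^[n] := by
  funext x
  induction n with
  | zero => rfl
  | succ n ih =>
    rw [List.replicate_succ, Function.iterate_succ_apply', ← ih]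
    rfl

section Lipschitz

variable {α : Type*}

theorem Set.Subsingleton.of_lipschitzWith_image_eq [MetricSpace α] {f : α → α} {K : NNReal}
    (hf : LipschitzWith K f) (hK : K < 1) {s : Set α} (hs : Bornology.IsBounded s)
    (hfs : f '' s = s) : s.Subsingleton := by
  by_contra hnt
  have hdiam := hf.diam_image_le s hs
  rw [hfs] at hdiam
  have hK' : (K : ℝ) < 1 := hK
  nlinarith [diam_pos (Set.not_subsingleton_iff.1 hnt) hs]

theorem LipschitzWith.image_iterate_subset_closedBall [PseudoMetricSpace α] {f : α → α}
    {K : NNReal} (hf : LipschitzWith K f) {c : α} (hc : Function.IsFixedPt f c) {s : Set α}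
    {r : ℝ} (hs : s ⊆ closedBall c r) (n : ℕ) :
    f^[n] '' s ⊆ closedBall c ((K : ℝ) ^ n * r) := by
  rintro _ ⟨x, hx, rfl⟩
  simpa [(hc.iterate n).eq] using (hf.iterate n).dist_le_mul_of_le (hs hx)

end Lipschitz

theorem lipschitzWith_mul_add (lam t : ℝ) : LipschitzWith ‖lam‖₊ (fun x => lam * x + t) :=
  LipschitzWith.of_dist_le_mul fun x y => by
    simp [Real.dist_eq, ← mul_sub, abs_mul]

theorem isFixedPt_mul_add {lam : ℝ} (hlam : lam ≠ 1) (t : ℝ) :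
    Function.IsFixedPt (fun x => lam * x + t) (t / (1 - lam)) := by
  have : 1 - lam ≠ 0 := sub_ne_zero.2 hlam.symm
  simp only [Function.IsFixedPt]
  field_simp
  ring

theorem exists_atom_of_subsingleton {α : Type*} [MeasurableSpace α] {μ : Measure α} [NeZero μ]
    {s : Set α}
    (hs : s.Subsingleton) (hsupp : μ sᶜ = 0) : ∃ x, μ {x} ≠ 0 := by
  rcases hs.eq_empty_or_singleton with rfl | ⟨x, rfl⟩
  · simp [NeZero.ne μ] at hsupp
  · refine ⟨x, fun hx => NeZero.ne μ ?_⟩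
    simpa [hx, hsupp] using measure_univ_le_add_compl {x} (μ := μ)

theorem exists_translation_ne {I : Type*} [Nonempty I] {lam : ℝ} (hlam : |lam| < 1)
    {t : I → ℝ} {X : Set ℝ} (hXb : Bornology.IsBounded X)
    (hX : X = ⋃ i, (fun x => lam * x + t i) '' X) {μ : Measure ℝ} [NeZero μ]
    (hsupp : μ Xᶜ = 0) (hna : ∀ x, μ {x} = 0) : ∃ i j, t i ≠ t j := by
  by_contra! hconst
  obtain ⟨i₀⟩ := ‹Nonempty I›
  have hX₀ : (fun x => lam * x + t i₀) '' X = X := by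
    conv_rhs => rw [hX]
    simp only [hconst _ i₀, Set.iUnion_const]
  have hsub : X.Subsingleton :=
    .of_lipschitzWith_image_eq (lipschitzWith_mul_add lam (t i₀))
      (by rwa [← NNReal.coe_lt_coe, coe_nnnorm, Real.norm_eq_abs, NNReal.coe_one]) hXb hX₀
  obtain ⟨x, hx⟩ := exists_atom_of_subsingleton hsub hsupp
  exact hx (hna x)

theorem stmt_13_general {I : Type*} [Nonempty I]
    (lam : ℝ) (hlam : lam ∈ Set.Ioo (0:ℝ) 1) (t : I → ℝ)
    (X : Set ℝ) (hXc : IsCompact X)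
    (hX : X = ⋃ i : I, (fun x => lam * x + t i) '' X)
    (μ : Measure ℝ) [IsProbabilityMeasure μ]
    (hsupp : μ Xᶜ = 0)
    (hna : ∀ x : ℝ, μ {x} = 0) :
    ∃ (M : ℕ) (w w' : List I), w.length = M ∧ w'.length = M ∧
      Disjoint (convexHull ℝ (compWord (fun i x => lam * x + t i) w '' X))
        (convexHull ℝ (compWord (fun i x => lam * x + t i) w' '' X)) := by
  obtain ⟨hlam0, hlam1⟩ := hlam
  have habs : |lam| < 1 := by rwa [abs_of_pos hlam0]
  obtain ⟨i, j, hij⟩ := exists_translation_ne habs hXc.isBounded hX hsupp hna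
  set c : I → ℝ := fun k => t k / (1 - lam)
  have hc : c i ≠ c j := by
    simpa [c, div_left_inj' (sub_ne_zero.2 hlam1.ne')] using hij
  obtain ⟨r, hri, hrj⟩ : ∃ r, X ⊆ closedBall (c i) r ∧ X ⊆ closedBall (c j) r := by
    obtain ⟨ri, hri⟩ := hXc.isBounded.subset_closedBall (c i)
    obtain ⟨rj, hrj⟩ := hXc.isBounded.subset_closedBall (c j)
    exact ⟨max ri rj, hri.trans (closedBall_subset_closedBall (le_max_left _ _)),
      hrj.trans (closedBall_subset_closedBall (le_max_right _ _))⟩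
  obtain ⟨n, hn⟩ : ∃ n : ℕ, |lam| ^ n * r + |lam| ^ n * r < dist (c i) (c j) := by
    have hlim := (tendsto_pow_atTop_nhds_zero_of_lt_one (abs_nonneg lam) habs).mul_const (2 * r)
    rw [zero_mul] at hlim
    obtain ⟨n, hn⟩ := (hlim.eventually (gt_mem_nhds (dist_pos.2 hc))).exists
    exact ⟨n, by linarith⟩
  have hcyl : ∀ k, X ⊆ closedBall (c k) r →
      convexHull ℝ (compWord (fun i x => lam * x + t i) (List.replicate n k) '' X) ⊆
        closedBall (c k) (|lam| ^ n * r) := fun k hk => by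
    refine convexHull_min ?_ (convex_closedBall _ _)
    simpa [compWord_replicate] using
      (lipschitzWith_mul_add lam (t k)).image_iterate_subset_closedBall
        (isFixedPt_mul_add hlam1.ne (t k)) hk n
  exact ⟨n, _, _, List.length_replicate, List.length_replicate,
    (closedBall_disjoint_closedBall hn).mono (hcyl i hri) (hcyl j hrj)⟩

/-- If `μ` is a non-atomic self-similar measure (with all weights positive, supported on
the attractor `X`) of an equicontractive IFS `{φ_i(x) = λx + t_i}` on `ℝ`, then there
exist `M` and two words of length `M` whose cylinder images of `X` have disjoint convex
hulls. -/
theorem stmt_13 {I : Type*} [Fintype I] [Nonempty I]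
    (lam : ℝ) (hlam : lam ∈ Set.Ioo (0:ℝ) 1) (t : I → ℝ)
    (X : Set ℝ) (hXne : X.Nonempty) (hXc : IsCompact X)
    (hX : X = ⋃ i : I, (fun x => lam * x + t i) '' X)
    (p : I → ENNReal) (hp : ∑ i, p i = 1) (hppos : ∀ i, 0 < p i)
    (μ : Measure ℝ) [IsProbabilityMeasure μ]
    (hμ : μ = ∑ i : I, p i • Measure.map (fun x => lam * x + t i) μ)
    (hsupp : μ Xᶜ = 0)
    (hna : ∀ x : ℝ, μ {x} = 0) :
    ∃ (M : ℕ) (w w' : List I), w.length = M ∧ w'.length = M ∧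
      Disjoint (convexHull ℝ (compWord (fun i x => lam * x + t i) w '' X))
        (convexHull ℝ (compWord (fun i x => lam * x + t i) w' '' X)) :=
  stmt_13_general lam hlam t X hXc hX μ hsupp hna
end
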